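/- (Phase II bound) For every A : Finset E, Σ_{i ∈ Fin k} λ i · (1 − Δ_i(A)) ≤ Σ_{e ∈ E2, C̃_A(e) ≤ S(e)} (S(e) − C̃_A(e)). -/

import Mathlib

/-!
Each `1 - Δ_i(A)` is bounded by the Weierstrass product inequality
`1 - ∏ aₑ ≤ ∑ (1 - aₑ)` with `aₑ = C̃_A(e) / S(e) ∈ [0, 1]`. Weighting by `λ i` and exchanging the
order of summation, each saturated shared edge `e` collects the weight `∑_{i ∋ e} λ i = S(e)`, and
`S(e) (1 - C̃_A(e) / S(e)) = S(e) - C̃_A(e)`.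
-/

open Finset

theorem Finset.one_sub_prod_le_sum_one_sub {ι R : Type*} [CommRing R] [LinearOrder R]
    [IsStrictOrderedRing R] (s : Finset ι) (f : ι → R)
    (h0 : ∀ i ∈ s, 0 ≤ f i) (h1 : ∀ i ∈ s, f i ≤ 1) :
    1 - ∏ i ∈ s, f i ≤ ∑ i ∈ s, (1 - f i) := by
  classical
  induction s using Finset.induction_on with
  | empty => simp
  | insert a s ha ih =>
    rw [forall_mem_insert] at h0 h1
    rw [prod_insert ha, sum_insert ha]
    have hprod1 : ∏ i ∈ s, f i ≤ 1 := prod_le_one h0.2 h1.2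
    -- `1 - a P = (1 - a) + a (1 - P) ≤ (1 - a) + (1 - P)` since `a ≤ 1` and `P ≤ 1`
    nlinarith [ih h0.2 h1.2]

theorem Finset.sum_mul_sum_filter_mem {ι α R : Type*} [CommSemiring R] [DecidableEq α]
    (t : Finset ι) (s : Finset α) (p : ι → Finset α) (w : ι → R) (f : α → R) :
    ∑ i ∈ t, w i * ∑ e ∈ s with e ∈ p i, f e =
      ∑ e ∈ s, (∑ i ∈ t with e ∈ p i, w i) * f e := by
  simp_rw [mul_sum, sum_mul, sum_filter]
  rw [sum_comm]

theorem phaseII_bound_general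
    {E : Type*} [Fintype E] [DecidableEq E]
    (k : ℕ)
    (p : Fin k → Finset E)
    (lam : Fin k → ℝ) (hlam : ∀ i, 0 < lam i)
    (C : E → ℝ) (γ : ℝ) (hγ : 0 ≤ γ) (hγC : ∀ e, γ ≤ C e) :
    let Ct : Finset E → E → ℝ := fun A e => if e ∈ A then C e - γ else C e
    let E2 : Finset E :=
      univ.filter (fun e => 2 ≤ ({i | e ∈ p i} : Finset (Fin k)).card)
    let S : E → ℝ := fun e => ∑ j ∈ ({j | e ∈ p j} : Finset (Fin k)), lam j
    let Δ : Fin k → Finset E → ℝ := fun i A =>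
      ∏ e ∈ (p i ∩ E2).filter (fun e => Ct A e ≤ S e), Ct A e / S e
    ∀ A : Finset E,
      ∑ i : Fin k, lam i * (1 - Δ i A) ≤
        ∑ e ∈ E2.filter (fun e => Ct A e ≤ S e), (S e - Ct A e) := by
  intro Ct E2 S Δ A
  set F := E2.filter (fun e => Ct A e ≤ S e)
  have hCt : ∀ e, 0 ≤ Ct A e := fun e => by
    by_cases he : e ∈ A <;> simp only [Ct, he, if_true, if_false] <;> linarith [hγC e]
  have hS : ∀ e ∈ F, 0 < S e := fun e he => by
    have hshared : 2 ≤ #{i | e ∈ p i} := (mem_filter.1 (mem_filter.1 he).1).2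
    exact sum_pos (fun i _ => hlam i) (card_pos.mp (by omega))
  have hΔ : ∀ i, 1 - Δ i A ≤ ∑ e ∈ F with e ∈ p i, (1 - Ct A e / S e) := fun i => by
    have hset : (p i ∩ E2).filter (fun e => Ct A e ≤ S e) = F.filter (· ∈ p i) := by
      ext e; simp only [F, mem_filter, mem_inter]; tauto
    simp only [Δ, hset]
    refine one_sub_prod_le_sum_one_sub _ _ (fun e he => ?_) (fun e he => ?_)
    · exact div_nonneg (hCt e) (hS e (mem_filter.1 he).1).le
    · exact div_le_one_of_le₀ (mem_filter.1 (mem_filter.1 he).1).2 (hS e (mem_filter.1 he).1).le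
  calc ∑ i, lam i * (1 - Δ i A)
      ≤ ∑ i, lam i * ∑ e ∈ F with e ∈ p i, (1 - Ct A e / S e) :=
        sum_le_sum fun i _ => mul_le_mul_of_nonneg_left (hΔ i) (hlam i).le
    _ = ∑ e ∈ F, S e * (1 - Ct A e / S e) := sum_mul_sum_filter_mem ..
    _ = ∑ e ∈ F, (S e - Ct A e) := sum_congr rfl fun e he => by
        rw [mul_one_sub, mul_div_cancel₀ _ (hS e he).ne']

/-- Phase II bound: `Σ_i λ i (1 − Δ_i(A)) ≤ Σ_{e ∈ E2, C̃_A(e) ≤ S(e)} (S(e) − C̃_A(e))`. -/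
theorem phaseII_bound
    {E : Type*} [Fintype E] [DecidableEq E]
    (k : ℕ) (hk : 1 ≤ k)
    (p : Fin k → Finset E) (hp : ∀ i, (p i).Nonempty)
    (lam : Fin k → ℝ) (hlam : ∀ i, 0 < lam i)
    (C : E → ℝ) (γ : ℝ) (hγ : 0 ≤ γ) (hγC : ∀ e, γ ≤ C e) :
    let Ct : Finset E → E → ℝ := fun A e => if e ∈ A then C e - γ else C e
    let E2 : Finset E :=
      univ.filter (fun e => 2 ≤ ({i | e ∈ p i} : Finset (Fin k)).card)
    let S : E → ℝ := fun e => ∑ j ∈ ({j | e ∈ p j} : Finset (Fin k)), lam j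
    let Δ : Fin k → Finset E → ℝ := fun i A =>
      ∏ e ∈ (p i ∩ E2).filter (fun e => Ct A e ≤ S e), Ct A e / S e
    ∀ A : Finset E,
      ∑ i : Fin k, lam i * (1 - Δ i A) ≤
        ∑ e ∈ E2.filter (fun e => Ct A e ≤ S e), (S e - Ct A e) :=
  phaseII_bound_general k p lam hlam C γ hγ hγC
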